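/- The Bell polynomials B_n(q) = ∑_{k=0}^{n} S(n,k) q^k form a q-log-convex sequence: for every n ≥ 1, the polynomial B_{n-1}(q) B_{n+1}(q) − B_n(q)² has nonnegative coefficients. -/

import Mathlib

/-!
Since `S(n+1,k) = k S(n,k) + S(n,k-1)`, the Bell polynomials satisfy `B_{n+1} = q (B_n + B_n')`,
hence `B_n B_{n+2} - B_{n+1}² = q W(B_n, B_{n+1})` with `W` the Wronskian. The coefficient of `q^m`
on the right is `∑_{k+j=m} (j - k) S(n,k) S(n+1,j)`; pairing `(k,j)` with `(j,k)` shows that it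
is nonnegative as soon as `S(n,j) S(n+1,k) ≤ S(n,k) S(n+1,j)` for `k ≤ j`. Through the recurrence
this reduces to `S(n,a) S(n,b+1) ≤ S(n,a+1) S(n,b)` for `a ≤ b`, which holds because every row of
the Stirling triangle is log-concave without internal zeros, and log-concavity of the rows propagates
from row `n` to row `n + 1` by the same recurrence.
-/

/-- Stirling numbers of the second kind. -/
def stirling2 : ℕ → ℕ → ℕ
  | 0, 0 => 1
  | 0, _ + 1 => 0
  | _ + 1, 0 => 0
  | n + 1, k + 1 => (k + 1) * stirling2 n (k + 1) + stirling2 n k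

/-- The Bell polynomial `B_n(q) = ∑_{k=0}^n S(n,k) q^k`. -/
noncomputable def bellPoly (n : ℕ) : Polynomial ℝ :=
  ∑ k ∈ Finset.range (n + 1), Polynomial.C (stirling2 n k : ℝ) * Polynomial.X ^ k

open Polynomial Finset

section LogConcave

variable {R : Type*}

def IsLogConcave [Monoid R] [LE R] (x : ℕ → R) : Prop :=
  ∀ k, x k * x (k + 2) ≤ x (k + 1) ^ 2

def HasNoInternalZeros [Zero R] (x : ℕ → R) : Prop :=
  ∀ ⦃i j k⦄, i ≤ j → j ≤ k → x i ≠ 0 → x k ≠ 0 → x j ≠ 0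

theorem IsLogConcave.mul_succ_le_succ_mul
    [CommSemiring R] [LinearOrder R] [IsStrictOrderedRing R]
    {x : ℕ → R} (hx : IsLogConcave x) (hz : HasNoInternalZeros x) (h0 : ∀ k, 0 ≤ x k)
    {a b : ℕ} (hab : a ≤ b) : x a * x (b + 1) ≤ x (a + 1) * x b := by
  obtain ⟨d, rfl⟩ := Nat.exists_eq_add_of_le hab
  induction d with
  | zero => exact (mul_comm _ _).le
  | succ d ih =>
    set c := a + d + 1
    show x a * x (c + 1) ≤ x (a + 1) * x c
    rcases (h0 c).eq_or_lt with hc0 | hc0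
    · have : x a = 0 ∨ x (c + 1) = 0 := by
        by_contra! h
        exact hz (show a ≤ c by omega) c.le_succ h.1 h.2 hc0.symm
      rw [← hc0, mul_zero]
      rcases this with h | h <;> simp [h]
    · refine le_of_mul_le_mul_right ?_ hc0
      calc x a * x (c + 1) * x c = x a * x c * x (c + 1) := by ring
        _ ≤ x (a + 1) * x (a + d) * x (c + 1) :=
          mul_le_mul_of_nonneg_right (ih (by omega)) (h0 _)
        _ = x (a + 1) * (x (a + d) * x (a + d + 2)) := by ring
        _ ≤ x (a + 1) * x c ^ 2 := mul_le_mul_of_nonneg_left (hx _) (h0 _)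
        _ = x (a + 1) * x c * x c := by ring

theorem sum_antidiagonal_sub_mul_nonneg [CommRing R] [LinearOrder R] [IsStrictOrderedRing R]
    {a b : ℕ → R} (h : ∀ ⦃k j⦄, k ≤ j → a j * b k ≤ a k * b j) (m : ℕ) :
    0 ≤ ∑ x ∈ antidiagonal m, ((x.2 : R) - x.1) * (a x.1 * b x.2) := by
  set F : ℕ × ℕ → R := fun x ↦ ((x.2 : R) - x.1) * (a x.1 * b x.2)
  have hsym : 0 ≤ ∑ x ∈ antidiagonal m, (F x + F x.swap) := by
    refine sum_nonneg fun ⟨k, j⟩ _ ↦ ?_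
    have hF : F (k, j) + F (k, j).swap = ((j : R) - k) * (a k * b j - a j * b k) := by
      simp only [F, Prod.swap_prod_mk]; ring
    rw [hF]
    rcases le_total k j with hkj | hjk
    · exact mul_nonneg (sub_nonneg.2 (by exact_mod_cast hkj)) (sub_nonneg.2 (h hkj))
    · exact mul_nonneg_of_nonpos_of_nonpos (sub_nonpos.2 (by exact_mod_cast hjk))
        (sub_nonpos.2 (h hjk))
  rw [sum_add_distrib, Nat.sum_antidiagonal_swap (f := F)] at hsym
  linarith

end LogConcave

namespace Polynomial

theorem coeff_X_mul_derivative {R : Type*} [Semiring R] (p : R[X]) (n : ℕ) :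
    (X * derivative p).coeff n = p.coeff n * n := by
  cases n with
  | zero => simp
  | succ n => rw [coeff_X_mul, coeff_derivative]; push_cast; rfl

theorem coeff_X_mul_wronskian {R : Type*} [CommRing R] (f g : R[X]) (m : ℕ) :
    (X * wronskian f g).coeff m =
      ∑ x ∈ antidiagonal m, ((x.2 : R) - x.1) * (f.coeff x.1 * g.coeff x.2) := by
  have : X * wronskian f g = f * (X * derivative g) - (X * derivative f) * g := by
    rw [wronskian]; ring
  rw [this, coeff_sub, coeff_mul, coeff_mul, ← sum_sub_distrib]
  refine sum_congr rfl fun x _ ↦ ?_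
  rw [coeff_X_mul_derivative, coeff_X_mul_derivative]
  ring

end Polynomial

namespace Nat

theorem stirlingSecond_pos {n k : ℕ} (hk0 : 0 < k) (hkn : k ≤ n) : 0 < stirlingSecond n k := by
  induction n generalizing k with
  | zero => omega
  | succ n ih =>
    obtain ⟨k, rfl⟩ := Nat.exists_eq_add_of_le' hk0
    rw [stirlingSecond_succ_succ]
    rcases (Nat.le_of_succ_le_succ hkn).lt_or_eq with hlt | rfl
    · have := ih k.succ_pos hlt
      positivity
    · rw [stirlingSecond_self]; omega

theorem hasNoInternalZeros_stirlingSecond (n : ℕ) : HasNoInternalZeros (stirlingSecond n) := by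
  intro i j k hij hjk hi hk
  have hkn : k ≤ n := by
    by_contra! h
    exact hk (stirlingSecond_eq_zero_of_lt h)
  rcases j.eq_zero_or_pos with rfl | hj
  · rwa [Nat.le_zero.1 hij] at hi
  · exact (stirlingSecond_pos hj (hjk.trans hkn)).ne'

theorem isLogConcave_stirlingSecond (n : ℕ) : IsLogConcave (stirlingSecond n) := by
  induction n with
  | zero => intro k; simp [stirlingSecond_eq_zero_of_lt (show 0 < k + 2 by omega)]
  | succ n ih =>
    have hratio := fun {a b : ℕ} (hab : a ≤ b) ↦
      ih.mul_succ_le_succ_mul (hasNoInternalZeros_stirlingSecond n) (fun _ ↦ Nat.zero_le _) hab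
    rintro (_ | k)
    · simp
    · simp only [stirlingSecond_succ_succ]
      -- With `s i = S(n, k + i)` and `K = k + 2`, `S(n+1,k+2)² - S(n+1,k+1) S(n+1,k+3)` equals
      -- `K² (s 2² - s 1 s 3) + s 1 s 3 + (K + 1) (s 1 s 2 - s 0 s 3) + (s 1² - s 0 s 2)`.
      nlinarith [Nat.mul_le_mul_left ((k + 2) ^ 2) (hratio (le_succ (k + 1))),
        Nat.mul_le_mul_left (k + 3) (hratio (show k ≤ k + 2 by omega)), hratio (le_succ k),
        Nat.zero_le (stirlingSecond n (k + 1) * stirlingSecond n (k + 3))]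

theorem stirlingSecond_mul_succ_le_mul_succ {n k j : ℕ} (hkj : k ≤ j) :
    stirlingSecond n j * stirlingSecond (n + 1) k ≤
      stirlingSecond n k * stirlingSecond (n + 1) j := by
  rcases k with _ | k
  · simp
  obtain ⟨j, rfl⟩ := Nat.exists_eq_add_of_le' (Nat.succ_pos k |>.trans_le hkj)
  have hratio := (isLogConcave_stirlingSecond n).mul_succ_le_succ_mul
    (hasNoInternalZeros_stirlingSecond n) (fun _ ↦ Nat.zero_le _) (Nat.le_of_succ_le_succ hkj)
  rw [stirlingSecond_succ_succ, stirlingSecond_succ_succ]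
  nlinarith [hratio, Nat.mul_le_mul_right (stirlingSecond n (k + 1) * stirlingSecond n (j + 1)) hkj]

end Nat

theorem stirling2_eq_stirlingSecond : stirling2 = Nat.stirlingSecond := by
  funext n k
  induction n generalizing k with
  | zero => cases k <;> rfl
  | succ n ih => cases k <;> simp [stirling2, Nat.stirlingSecond_succ_succ, ih]

theorem coeff_bellPoly (n k : ℕ) : (bellPoly n).coeff k = Nat.stirlingSecond n k := by
  rw [bellPoly, finsetSum_coeff]
  simp only [coeff_C_mul_X_pow, sum_ite_eq, mem_range, stirling2_eq_stirlingSecond]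
  split_ifs with h
  · rfl
  · rw [Nat.stirlingSecond_eq_zero_of_lt (by omega), Nat.cast_zero]

theorem bellPoly_succ (n : ℕ) :
    bellPoly (n + 1) = X * (bellPoly n + derivative (bellPoly n)) := by
  ext (_ | k)
  · simp [coeff_bellPoly]
  · rw [coeff_X_mul, coeff_add, coeff_derivative, coeff_bellPoly, coeff_bellPoly, coeff_bellPoly,
      Nat.stirlingSecond_succ_succ]
    push_cast; ring

theorem bellPoly_mul_sub_sq (n : ℕ) :
    bellPoly n * bellPoly (n + 2) - bellPoly (n + 1) ^ 2 =
      X * wronskian (bellPoly n) (bellPoly (n + 1)) := by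
  rw [wronskian]
  linear_combination bellPoly n * bellPoly_succ (n + 1) - bellPoly (n + 1) * bellPoly_succ n

theorem qLogConvex_bellPoly :
    ∀ n : ℕ, ∀ m : ℕ,
      0 ≤ (bellPoly n * bellPoly (n + 2) - (bellPoly (n + 1)) ^ 2).coeff m := by
  intro n m
  rw [bellPoly_mul_sub_sq, coeff_X_mul_wronskian]
  simp only [coeff_bellPoly]
  exact sum_antidiagonal_sub_mul_nonneg (a := fun k ↦ (Nat.stirlingSecond n k : ℝ))
    (b := fun j ↦ (Nat.stirlingSecond (n + 1) j : ℝ))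
    (fun k j hkj ↦ by exact_mod_cast Nat.stirlingSecond_mul_succ_le_mul_succ hkj) m
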